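/- arXiv:1401.6211 — 5 statements merged into one kernel-verified Lean document; each statement's English description precedes it below -/
import Mathlib

section
/- Let f : A → B be a ring homomorphism of commutative rings, each equipped with a derivation making them differential rings, with f commuting with the derivations, and assume both are Keigher rings (the radical of every differential ideal is a differential ideal). If 𝔭 ⊂ A is a prime differential ideal such that the fiber of Spec B → Spec A over 𝔭 is nonempty, then there exists a prime differential ideal 𝔮 ⊂ B with f⁻¹(𝔮) = 𝔭. -/
/-- A derivation on a commutative ring, as a predicate. -/
def IsDerivationFn {R : Type*} [CommRing R] (d : R → R) : Prop :=
  (∀ a b : R, d (a + b) = d a + d b) ∧ (∀ a b : R, d (a * b) = a * d b + d a * b)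

/-- A differential ideal: an ideal stable under the derivation. -/
def IsDiffIdeal {R : Type*} [CommRing R] (d : R → R) (I : Ideal R) : Prop :=
  ∀ x ∈ I, d x ∈ I

/-- A Keigher ring: the radical of every differential ideal is differential. -/
def IsKeigher {R : Type*} [CommRing R] (d : R → R) : Prop :=
  IsDerivationFn d ∧ ∀ I : Ideal R, IsDiffIdeal d I → IsDiffIdeal d I.radical

lemma IsDerivationFn.map_zero {R : Type*} [CommRing R] {d : R → R}
    (hd : IsDerivationFn d) : d 0 = 0 := by
  have := hd.1 0 0
  rw [add_zero] at this
  exact left_eq_add.mp this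

/-- An ideal spanned by a set stable (mod span) under the derivation is differential. -/
lemma isDiffIdeal_span {R : Type*} [CommRing R] {d : R → R} (hd : IsDerivationFn d)
    (T : Set R) (hT : ∀ x ∈ T, d x ∈ Ideal.span T) : IsDiffIdeal d (Ideal.span T) := by
  intro x hx
  induction hx using Submodule.span_induction with
  | mem y hy => exact hT y hy
  | zero => rw [hd.map_zero]; exact Ideal.zero_mem _
  | add y z _ _ hy hz => rw [hd.1 y z]; exact Ideal.add_mem _ hy hz
  | smul a y hmem hy =>
      show d (a * y) ∈ Ideal.span T
      rw [hd.2 a y]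
      exact Ideal.add_mem _ (Ideal.mul_mem_left _ _ hy) (Ideal.mul_mem_left _ _ hmem)

/-- If the fiber over a prime differential ideal is nonempty, it contains a
prime differential ideal. -/
theorem fiber_nonempty_contains_diff_prime
    {A B : Type*} [CommRing A] [CommRing B]
    (dA : A → A) (dB : B → B) (hA : IsKeigher dA) (hB : IsKeigher dB)
    (f : A →+* B) (hf : ∀ a : A, f (dA a) = dB (f a))
    (𝔭 : Ideal A) (h𝔭 : 𝔭.IsPrime) (h𝔭d : IsDiffIdeal dA 𝔭)
    (hfiber : ∃ 𝔮 : Ideal B, 𝔮.IsPrime ∧ Ideal.comap f 𝔮 = 𝔭) :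
    ∃ 𝔮 : Ideal B, 𝔮.IsPrime ∧ IsDiffIdeal dB 𝔮 ∧ Ideal.comap f 𝔮 = 𝔭 := by
  obtain ⟨𝔮₀, h𝔮₀, hc⟩ := hfiber
  -- J₀ = the ideal of B generated by f(𝔭); it is differential since 𝔭 is.
  set J₀ : Ideal B := Ideal.map f 𝔭 with hJ₀def
  have hJ₀d : IsDiffIdeal dB J₀ := by
    apply isDiffIdeal_span hB.1
    rintro x ⟨p, hp, rfl⟩
    rw [← hf]
    exact Ideal.subset_span ⟨dA p, h𝔭d p hp, rfl⟩
  -- I = √J₀ is a radical differential ideal contained in 𝔮₀.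
  set I : Ideal B := J₀.radical with hIdef
  have hId : IsDiffIdeal dB I := hB.2 J₀ hJ₀d
  have hJ₀𝔮₀ : J₀ ≤ 𝔮₀ := Ideal.map_le_iff_le_comap.2 (le_of_eq hc.symm)
  have hI𝔮₀ : I ≤ 𝔮₀ := h𝔮₀.radical_le_iff.2 hJ₀𝔮₀
  -- P: a minimal prime over I contained in 𝔮₀.
  obtain ⟨P, hPmin, hP𝔮₀⟩ := Ideal.exists_minimalPrimes_le hI𝔮₀
  have hPp : P.IsPrime := hPmin.1.1
  have hIP : I ≤ P := hPmin.1.2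
  -- The saturation J of I at P.
  let J : Ideal B :=
    { carrier := {x | ∃ s, s ∉ P ∧ s * x ∈ I}
      add_mem' := by
        rintro x y ⟨s, hs, hsx⟩ ⟨t, ht, hty⟩
        refine ⟨s * t, fun h => (hPp.mem_or_mem h).elim hs ht, ?_⟩
        have : s * t * (x + y) = t * (s * x) + s * (t * y) := by ring
        rw [this]
        exact Ideal.add_mem _ (Ideal.mul_mem_left _ _ hsx) (Ideal.mul_mem_left _ _ hty)
      zero_mem' := ⟨1, hPp.1 ∘ (Ideal.eq_top_iff_one P).2, by simpa using Ideal.zero_mem I⟩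
      smul_mem' := by
        rintro b x ⟨s, hs, hsx⟩
        refine ⟨s, hs, ?_⟩
        have : s * (b • x) = b * (s * x) := by simp [smul_eq_mul]; ring
        rw [this]
        exact Ideal.mul_mem_left _ _ hsx }
  have hJmem : ∀ x : B, x ∈ J ↔ ∃ s, s ∉ P ∧ s * x ∈ I := fun x => Iff.rfl
  -- J is a differential ideal.
  have hJd : IsDiffIdeal dB J := by
    rintro x ⟨s, hs, hsx⟩
    refine ⟨s * s, fun h => (hPp.mem_or_mem h).elim hs hs, ?_⟩
    have key : s * s * dB x = s * dB (s * x) - dB s * (s * x) := by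
      rw [hB.1.2 s x]; ring
    rw [key]
    exact Ideal.sub_mem _ (Ideal.mul_mem_left _ _ (hId _ hsx)) (Ideal.mul_mem_left _ _ hsx)
  -- J ≤ P, hence √J ≤ P.
  have hJP : J ≤ P := by
    rintro x ⟨s, hs, hsx⟩
    rcases hPp.mem_or_mem (hIP hsx) with h | h
    · exact absurd h hs
    · exact h
  have hradJP : J.radical ≤ P := hPp.radical_le_iff.2 hJP
  -- P ≤ √J by minimality of P.
  have hPradJ : P ≤ J.radical := by
    intro x hx
    by_contra hxn
    -- the multiplicative set of elements s * x^n with s ∉ P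
    let T : Submonoid B :=
      { carrier := {b | ∃ n : ℕ, ∃ s, s ∉ P ∧ b = s * x ^ n}
        one_mem' := ⟨0, 1, hPp.1 ∘ (Ideal.eq_top_iff_one P).2, by simp⟩
        mul_mem' := by
          rintro a b ⟨n, s, hs, rfl⟩ ⟨m, t, ht, rfl⟩
          exact ⟨n + m, s * t, fun h => (hPp.mem_or_mem h).elim hs ht, by ring⟩ }
    have hdisj : Disjoint (I : Set B) (T : Set B) := by
      rw [Set.disjoint_left]
      rintro b hbI ⟨n, s, hs, rfl⟩
      exact hxn ⟨n, ⟨s, hs, hbI⟩⟩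
    obtain ⟨Q, hQp, hIQ, hQT⟩ := Ideal.exists_le_prime_disjoint I T hdisj
    have hQP : Q ≤ P := by
      intro y hy
      by_contra hyP
      exact Set.disjoint_left.1 hQT hy ⟨0, y, hyP, by simp⟩
    have hPQ : P ≤ Q := hPmin.2 ⟨hQp, hIQ⟩ hQP
    exact Set.disjoint_left.1 hQT (hPQ hx)
      ⟨1, 1, hPp.1 ∘ (Ideal.eq_top_iff_one P).2, by simp⟩
  have hPeq : P = J.radical := le_antisymm hPradJ hradJP
  refine ⟨P, hPp, ?_, ?_⟩
  · rw [hPeq]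
    exact hB.2 J hJd
  · apply le_antisymm
    · rw [← hc]
      exact Ideal.comap_mono hP𝔮₀
    · intro a ha
      exact hIP (Ideal.le_radical (Ideal.mem_map_of_mem f ha))
end

section
/- Let f : A → B be a differential homomorphism of Keigher differential rings and let 𝔭 be a prime differential ideal of A. The following are equivalent: (1) 𝔭 = f⁻¹(f(𝔭)·B); (2) there exists a prime ideal 𝔮 of B with f⁻¹(𝔮) = 𝔭; (3) there exists a prime differential ideal 𝔮 of B with f⁻¹(𝔮) = 𝔭. -/
/-- Key lemma: in a radical differential ideal, `a*b ∈ I` implies `a * d b ∈ I`. -/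
lemma aux_mul_deriv_mem {R : Type*} [CommRing R] {d : R → R} (hd : IsDerivationFn d)
    {I : Ideal R} (hrad : I.radical = I) (hdiff : IsDiffIdeal d I)
    {a b : R} (hab : a * b ∈ I) : a * d b ∈ I := by
  have h1 : a * d b + d a * b ∈ I := by rw [← hd.2 a b]; exact hdiff _ hab
  have h2 : (a * d b) * (a * d b + d a * b) ∈ I := Ideal.mul_mem_left _ _ h1
  have h3 : (a * b) * (d a * d b) ∈ I := Ideal.mul_mem_right _ _ hab
  have h4 : (a * d b) ^ 2 ∈ I := by
    have : (a * d b) ^ 2 = (a * d b) * (a * d b + d a * b) - (a * b) * (d a * d b) := by ring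
    rw [this]; exact Ideal.sub_mem _ h2 h3
  have : a * d b ∈ I.radical := ⟨2, h4⟩
  rwa [hrad] at this

/-- Colon ideal of a radical differential ideal by an element is radical and differential. -/
lemma aux_colon_props {R : Type*} [CommRing R] {d : R → R} (hd : IsDerivationFn d)
    {I : Ideal R} (hrad : I.radical = I) (hdiff : IsDiffIdeal d I) (a : R) :
    (I.colon (Ideal.span {a})).radical = I.colon (Ideal.span {a}) ∧
      IsDiffIdeal d (I.colon (Ideal.span {a})) ∧ I ≤ I.colon (Ideal.span {a}) := by
  refine ⟨le_antisymm ?_ Ideal.le_radical, ?_, ?_⟩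
  · intro x hx
    obtain ⟨n, hn⟩ := hx
    rw [Ideal.mem_colon_span_singleton] at hn ⊢
    have : (x * a) ^ (n + 1) ∈ I := by
      have : (x * a) ^ (n + 1) = (x ^ n * a) * (x * a ^ n) := by ring
      rw [this]; exact Ideal.mul_mem_right _ _ hn
    have : x * a ∈ I.radical := ⟨n + 1, this⟩
    rwa [hrad] at this
  · intro x hx
    rw [Ideal.mem_colon_span_singleton] at hx ⊢
    rw [mul_comm] at hx ⊢
    exact aux_mul_deriv_mem hd hrad hdiff hx
  · intro x hx
    rw [Ideal.mem_colon_span_singleton]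
    exact Ideal.mul_mem_right _ _ hx

/-- Existence of a prime differential ideal containing a radical differential ideal
disjoint from a multiplicative set. -/
lemma aux_exists_prime_diff {B : Type*} [CommRing B] {dB : B → B} (hB : IsKeigher dB)
    (J : Ideal B) (hJd : IsDiffIdeal dB J) (hJr : J.radical = J)
    (S : Set B) (h1S : (1 : B) ∈ S) (hmul : ∀ s ∈ S, ∀ t ∈ S, s * t ∈ S)
    (hdisj : ∀ s ∈ S, s ∉ J) :
    ∃ Q : Ideal B, Q.IsPrime ∧ IsDiffIdeal dB Q ∧ J ≤ Q ∧ ∀ s ∈ S, s ∉ Q := by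
  set 𝒮 : Set (Ideal B) :=
    {I | IsDiffIdeal dB I ∧ I.radical = I ∧ ∀ s ∈ S, s ∉ I} with h𝒮
  have hchains : ∀ c ⊆ 𝒮, IsChain (· ≤ ·) c → ∀ y ∈ c, ∃ ub ∈ 𝒮, ∀ z ∈ c, z ≤ ub := by
    intro c hc𝒮 hchain y hy
    refine ⟨sSup c, ⟨?_, ?_, ?_⟩, fun z hz => le_sSup hz⟩
    · intro x hx
      obtain ⟨I, hIc, hxI⟩ := (Submodule.mem_sSup_of_directed ⟨y, hy⟩
        hchain.directedOn).1 hx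
      exact Submodule.mem_sSup_of_mem hIc ((hc𝒮 hIc).1 _ hxI)
    · refine le_antisymm ?_ Ideal.le_radical
      intro x hx
      obtain ⟨n, hn⟩ := hx
      obtain ⟨I, hIc, hxI⟩ := (Submodule.mem_sSup_of_directed ⟨y, hy⟩
        hchain.directedOn).1 hn
      have : x ∈ Ideal.radical I := ⟨n, hxI⟩
      rw [(hc𝒮 hIc).2.1] at this
      exact Submodule.mem_sSup_of_mem hIc this
    · intro s hsS hs
      obtain ⟨I, hIc, hxI⟩ := (Submodule.mem_sSup_of_directed ⟨y, hy⟩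
        hchain.directedOn).1 hs
      exact (hc𝒮 hIc).2.2 s hsS hxI
  obtain ⟨Q, hJQ, hQ𝒮, hQmax⟩ := zorn_le_nonempty₀ 𝒮 hchains J ⟨hJd, hJr, hdisj⟩
  · obtain ⟨hQd, hQr, hQS⟩ := hQ𝒮
    have hQtop : Q ≠ ⊤ := fun h => hQS 1 h1S (h ▸ Submodule.mem_top)
    refine ⟨Q, ⟨hQtop, ?_⟩, hQd, hJQ, hQS⟩
    intro a b hab
    by_contra hcon
    push_neg at hcon
    obtain ⟨ha, hb⟩ := hcon
    -- consider K1 = Q : a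
    obtain ⟨hK1r, hK1d, hK1le⟩ := aux_colon_props hB.1 hQr hQd a
    by_cases hK1S : ∀ s ∈ S, s ∉ Q.colon (Ideal.span {a})
    · have : Q.colon (Ideal.span {a}) = Q :=
        (hQmax ⟨hK1d, hK1r, hK1S⟩ hK1le).antisymm hK1le
      exact hb (this ▸ Ideal.mem_colon_span_singleton.2 (by rwa [mul_comm] at hab))
    · push_neg at hK1S
      obtain ⟨s, hsS, hsa⟩ := hK1S
      rw [Ideal.mem_colon_span_singleton] at hsa
      -- consider K2 = Q : s
      obtain ⟨hK2r, hK2d, hK2le⟩ := aux_colon_props hB.1 hQr hQd s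
      have hK2S : ∀ t ∈ S, t ∉ Q.colon (Ideal.span {s}) := by
        intro t htS hst
        rw [Ideal.mem_colon_span_singleton] at hst
        exact hQS _ (hmul s hsS t htS) (by rwa [mul_comm] at hst)
      have : Q.colon (Ideal.span {s}) = Q :=
        (hQmax ⟨hK2d, hK2r, hK2S⟩ hK2le).antisymm hK2le
      exact ha (this ▸ Ideal.mem_colon_span_singleton.2 (by rwa [mul_comm] at hsa))

/-- Lemma 5.4: equivalence of the three conditions on a prime differential
ideal of A. -/
theorem diff_prime_fiber_tfae
    {A B : Type*} [CommRing A] [CommRing B]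
    (dA : A → A) (dB : B → B) (hA : IsKeigher dA) (hB : IsKeigher dB)
    (f : A →+* B) (hf : ∀ a : A, f (dA a) = dB (f a))
    (𝔭 : Ideal A) (h𝔭 : 𝔭.IsPrime) (h𝔭d : IsDiffIdeal dA 𝔭) :
    List.TFAE [
      𝔭 = Ideal.comap f (Ideal.map f 𝔭),
      ∃ 𝔮 : Ideal B, 𝔮.IsPrime ∧ Ideal.comap f 𝔮 = 𝔭,
      ∃ 𝔮 : Ideal B, 𝔮.IsPrime ∧ IsDiffIdeal dB 𝔮 ∧ Ideal.comap f 𝔮 = 𝔭] := by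
  tfae_have 3 → 2 := by rintro ⟨𝔮, hq, _, hqc⟩; exact ⟨𝔮, hq, hqc⟩
  tfae_have 2 → 1 := by
    rintro ⟨𝔮, hq, rfl⟩
    refine le_antisymm Ideal.le_comap_map ?_
    exact Ideal.comap_mono (Ideal.map_comap_le)
  tfae_have 1 → 3 := by
    intro h1
    -- map f 𝔭 is differential
    have hmapd : IsDiffIdeal dB (Ideal.map f 𝔭) := by
      intro x hx
      rw [Ideal.map, Ideal.span] at hx
      refine Submodule.span_induction ?_ ?_ ?_ ?_ hx
      · rintro y ⟨a, ha, rfl⟩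
        rw [← hf a]
        exact Ideal.mem_map_of_mem f (h𝔭d a ha)
      · have : dB (0 : B) = 0 := by
          have := hB.1.1 0 0
          simpa using this
        rw [this]; exact Ideal.zero_mem _
      · intro y z _ _ hy hz
        rw [hB.1.1 y z]; exact Ideal.add_mem _ hy hz
      · intro b y hy hdy
        have hymem : y ∈ Ideal.map f 𝔭 := by
          rwa [Ideal.map, Ideal.span]
        rw [smul_eq_mul, hB.1.2 b y]
        exact Ideal.add_mem _ (Ideal.mul_mem_left _ _ hdy)
          (Ideal.mul_mem_left _ _ hymem)
    -- J = radical of map f 𝔭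
    set J := (Ideal.map f 𝔭).radical with hJ
    have hJd : IsDiffIdeal dB J := hB.2 _ hmapd
    have hJr : J.radical = J := Ideal.radical_idem _
    have hcomapJ : Ideal.comap f J = 𝔭 := by
      rw [hJ, Ideal.comap_radical, ← h1, h𝔭.radical]
    set S : Set B := f '' (𝔭ᶜ : Set A) with hS
    have h1S : (1 : B) ∈ S := ⟨1, h𝔭.ne_top ∘ (Ideal.eq_top_iff_one 𝔭).2, f.map_one⟩
    have hmulS : ∀ s ∈ S, ∀ t ∈ S, s * t ∈ S := by
      rintro _ ⟨a, ha, rfl⟩ _ ⟨b, hb, rfl⟩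
      exact ⟨a * b, fun h => ((h𝔭.mem_or_mem h).elim ha hb), f.map_mul a b⟩
    have hdisjS : ∀ s ∈ S, s ∉ J := by
      rintro _ ⟨a, ha, rfl⟩ hmem
      exact ha (hcomapJ ▸ hmem)
    obtain ⟨Q, hQp, hQd, hJQ, hQS⟩ := aux_exists_prime_diff hB J hJd hJr S h1S hmulS hdisjS
    refine ⟨Q, hQp, hQd, le_antisymm ?_ ?_⟩
    · intro a haQ
      by_contra ha
      exact hQS (f a) ⟨a, ha, rfl⟩ haQ
    · calc 𝔭 = Ideal.comap f J := hcomapJ.symm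
        _ ≤ Ideal.comap f Q := Ideal.comap_mono hJQ
  tfae_finish
end

section
/- Let f : A → B be a differential homomorphism of Keigher differential rings. If the induced map f* : Spec B → Spec A on prime spectra is surjective, then its restriction to differential spectra f*_Δ : Spec^Δ B → Spec^Δ A (prime differential ideals) is also surjective. -/
/-!
Let `𝔭` be a prime differential ideal of `A` and `S = f (A ∖ 𝔭)`. Since some prime of `B` lies
over `𝔭`, the extension `𝔭B` misses `S`, and it is a differential ideal. By Zorn's lemma it lies
in a differential ideal `Q` maximal among those missing `S`; the Keigher property makes `Q`
radical, and then the colon ideals `Q : x` are differential too, which forces `Q` to be prime.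
Its contraction is `𝔭`, as for any ideal containing `𝔭B` and missing `S`.
-/

namespace IsDerivationFn

variable {R : Type*} [CommRing R] {d : R → R}

theorem map_zero_s5 (hd : IsDerivationFn d) : d 0 = 0 := by
  simpa using hd.1 0 0

theorem isDiffIdeal_span (hd : IsDerivationFn d) {s : Set R}
    (hs : ∀ x ∈ s, d x ∈ Ideal.span s) : IsDiffIdeal d (Ideal.span s) := by
  intro x hx
  induction hx using Submodule.span_induction with
  | mem x hx => exact hs x hx
  | zero => rw [hd.map_zero_s5]; exact zero_mem _
  | add x y _ _ hx hy => rw [hd.1]; exact add_mem hx hy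
  | smul r x hx' hx =>
    rw [smul_eq_mul, hd.2]
    exact add_mem (Ideal.mul_mem_left _ r hx) (Ideal.mul_mem_left _ (d r) hx')

end IsDerivationFn

theorem IsDiffIdeal.map {A B : Type*} [CommRing A] [CommRing B] {dA : A → A} {dB : B → B}
    (hdB : IsDerivationFn dB) {f : A →+* B} (hf : ∀ a, f (dA a) = dB (f a)) {I : Ideal A}
    (hI : IsDiffIdeal dA I) : IsDiffIdeal dB (I.map f) :=
  hdB.isDiffIdeal_span <| by
    rintro _ ⟨a, ha, rfl⟩
    rw [← hf]
    exact Ideal.subset_span ⟨_, hI a ha, rfl⟩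

namespace IsDiffIdeal

variable {R : Type*} [CommRing R] {d : R → R}

theorem sSup_of_directedOn {c : Set (Ideal R)} (hc : ∀ I ∈ c, IsDiffIdeal d I)
    (hne : c.Nonempty) (hdir : DirectedOn (· ≤ ·) c) : IsDiffIdeal d (sSup c) := by
  intro x hx
  obtain ⟨I, hI, hxI⟩ := (Submodule.mem_sSup_of_directed hne hdir).1 hx
  exact Submodule.mem_sSup_of_mem hI (hc I hI x hxI)

/-- `(a d b)² = a d b · d(ab) - ab · da db`, so `a d b` lies in the radical of `Q`. -/
theorem mul_deriv_mem (hd : IsDerivationFn d) {Q : Ideal R} (hQ : IsDiffIdeal d Q)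
    (hrad : Q.IsRadical) {a b : R} (hab : a * b ∈ Q) : a * d b ∈ Q := by
  have hdab : a * d b + d a * b ∈ Q := hd.2 a b ▸ hQ _ hab
  refine hrad ⟨2, ?_⟩
  have : (a * d b) ^ 2 = (a * d b) * (a * d b + d a * b) - (a * b) * (d a * d b) := by ring
  rw [this]
  exact Q.sub_mem (Q.mul_mem_left _ hdab) (Q.mul_mem_right _ hab)

theorem colon_span_singleton (hd : IsDerivationFn d) {Q : Ideal R} (hQ : IsDiffIdeal d Q)
    (hrad : Q.IsRadical) (x : R) : IsDiffIdeal d (Q.colon (Ideal.span {x})) := by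
  intro y hy
  rw [Ideal.mem_colon_span_singleton, mul_comm] at hy ⊢
  exact hQ.mul_deriv_mem hd hrad hy

end IsDiffIdeal

section MaximalDisjoint

variable {R : Type*} [CommRing R] {d : R → R} {S : Submonoid R} {Q : Ideal R}

theorem isRadical_of_maximal_isDiffIdeal_disjoint (hd : IsKeigher d)
    (hQ : Maximal (fun I : Ideal R ↦ IsDiffIdeal d I ∧ Disjoint (I : Set R) S) Q) :
    Q.IsRadical := by
  have hrad_disj : Disjoint (Q.radical : Set R) S :=
    Set.disjoint_left.mpr fun _ ⟨n, hn⟩ hx ↦ Set.disjoint_left.mp hQ.1.2 hn (pow_mem hx n)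
  exact hQ.2 ⟨hd.2 Q hQ.1.1, hrad_disj⟩ Q.le_radical

theorem isPrime_of_maximal_isDiffIdeal_disjoint (hd : IsDerivationFn d)
    (hQ : Maximal (fun I : Ideal R ↦ IsDiffIdeal d I ∧ Disjoint (I : Set R) S) Q)
    (hrad : Q.IsRadical) : Q.IsPrime := by
  have colon_le (x : R) (hx : Disjoint (Q.colon (Ideal.span {x}) : Set R) S) :
      Q.colon (Ideal.span {x}) ≤ Q :=
    hQ.2 ⟨hQ.1.1.colon_span_singleton hd hrad x, hx⟩ Ideal.le_colon
  refine ⟨fun htop ↦ Set.disjoint_left.mp hQ.1.2 (htop ▸ Submodule.mem_top) S.one_mem, ?_⟩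
  intro a b hab
  by_contra! ⟨ha, hb⟩
  obtain ⟨s, hsb, hs⟩ := Set.not_disjoint_iff.mp fun h ↦
    ha (colon_le b h (Ideal.mem_colon_span_singleton.mpr hab))
  rw [SetLike.mem_coe, Ideal.mem_colon_span_singleton] at hsb
  have hs_disj : Disjoint (Q.colon (Ideal.span {s}) : Set R) S := by
    refine Set.disjoint_left.mpr fun t ht htS ↦ ?_
    exact Set.disjoint_left.mp hQ.1.2 (Ideal.mem_colon_span_singleton.mp ht) (S.mul_mem htS hs)
  exact hb (colon_le s hs_disj (Ideal.mem_colon_span_singleton.mpr (mul_comm b s ▸ hsb)))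

theorem exists_le_isPrime_isDiffIdeal_disjoint (hd : IsKeigher d) {I : Ideal R}
    (hI : IsDiffIdeal d I) (hIS : Disjoint (I : Set R) S) :
    ∃ Q : Ideal R, Q.IsPrime ∧ IsDiffIdeal d Q ∧ I ≤ Q ∧ Disjoint (Q : Set R) S := by
  obtain ⟨Q, hIQ, hQ⟩ := zorn_le_nonempty₀
    {J : Ideal R | IsDiffIdeal d J ∧ Disjoint (J : Set R) S} (fun c hc hchain J hJ ↦ by
      refine ⟨sSup c, ⟨IsDiffIdeal.sSup_of_directedOn (fun K hK ↦ (hc hK).1) ⟨J, hJ⟩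
        hchain.directedOn, Set.disjoint_left.mpr fun x hx ↦ ?_⟩, fun _ ↦ le_sSup⟩
      obtain ⟨K, hK, hxK⟩ := (Submodule.mem_sSup_of_directed ⟨J, hJ⟩ hchain.directedOn).1 hx
      exact Set.disjoint_left.mp (hc hK).2 hxK) I ⟨hI, hIS⟩
  have hrad := isRadical_of_maximal_isDiffIdeal_disjoint hd hQ
  exact ⟨Q, isPrime_of_maximal_isDiffIdeal_disjoint hd.1 hQ hrad, hQ.1.1, hIQ, hQ.1.2⟩

end MaximalDisjoint

theorem surjective_spec_implies_surjective_diff_spec_general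
    {A B : Type*} [CommRing A] [CommRing B]
    (dA : A → A) (dB : B → B) (hB : IsKeigher dB)
    (f : A →+* B) (hf : ∀ a : A, f (dA a) = dB (f a))
    (hsurj : ∀ 𝔭 : Ideal A, 𝔭.IsPrime → ∃ 𝔮 : Ideal B, 𝔮.IsPrime ∧ Ideal.comap f 𝔮 = 𝔭) :
    ∀ 𝔭 : Ideal A, 𝔭.IsPrime → IsDiffIdeal dA 𝔭 →
      ∃ 𝔮 : Ideal B, 𝔮.IsPrime ∧ IsDiffIdeal dB 𝔮 ∧ Ideal.comap f 𝔮 = 𝔭 := by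
  intro 𝔭 hp hpd
  have h𝔭 : (𝔭.map f).comap f = 𝔭 := (Ideal.comap_map_eq_self_iff_of_isPrime 𝔭).mpr (hsurj 𝔭 hp)
  obtain ⟨Q, hQ, hQd, hle, hdisj⟩ := exists_le_isPrime_isDiffIdeal_disjoint hB
    (hpd.map hB.1 hf) (Ideal.disjoint_map_primeCompl_iff_comap_le.mpr h𝔭.le)
  exact ⟨Q, hQ, hQd, le_antisymm (Ideal.disjoint_map_primeCompl_iff_comap_le.mp hdisj)
    (Ideal.map_le_iff_le_comap.mp hle)⟩

/-- surjectivity on prime spectra implies surjectivity on differential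
spectra. -/
theorem surjective_spec_implies_surjective_diff_spec
    {A B : Type*} [CommRing A] [CommRing B]
    (dA : A → A) (dB : B → B) (hA : IsKeigher dA) (hB : IsKeigher dB)
    (f : A →+* B) (hf : ∀ a : A, f (dA a) = dB (f a))
    (hsurj : ∀ 𝔭 : Ideal A, 𝔭.IsPrime → ∃ 𝔮 : Ideal B, 𝔮.IsPrime ∧ Ideal.comap f 𝔮 = 𝔭) :
    ∀ 𝔭 : Ideal A, 𝔭.IsPrime → IsDiffIdeal dA 𝔭 →
      ∃ 𝔮 : Ideal B, 𝔮.IsPrime ∧ IsDiffIdeal dB 𝔮 ∧ Ideal.comap f 𝔮 = 𝔭 :=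
  surjective_spec_implies_surjective_diff_spec_general dA dB hB f hf hsurj
end

section
/- Let f : A → B be a differential homomorphism of Keigher differential rings. If f has the going-up property for prime ideals, then f has the going-up property for prime differential ideals: given a chain 𝔭₁ ⊆ … ⊆ 𝔭ₙ of prime differential ideals of A (pulled back from f(A)) and prime differential ideals 𝔮₁ ⊆ … ⊆ 𝔮ₘ of B lying over 𝔭₁,…,𝔭ₘ (m ≤ n), the chain of 𝔮's can be extended to 𝔮₁ ⊆ … ⊆ 𝔮ₙ with each 𝔮ᵢ a prime differential ideal lying over 𝔭ᵢ. -/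
section Aux

variable {B : Type*} [CommRing B] {d : B → B}

/-- If `a*b` lies in a radical differential ideal, so does `a * d b`. -/
lemma aux_mul_deriv (hd : IsDerivationFn d) {I : Ideal B} (hrad : I.radical ≤ I)
    (hdiff : IsDiffIdeal d I) {a b : B} (h : a * b ∈ I) : a * d b ∈ I := by
  have h1 : a * d b + d a * b ∈ I := by have := hdiff _ h; rwa [hd.2] at this
  have h2 : (a * d b) * (a * d b + d a * b) ∈ I := I.mul_mem_left _ h1
  have h3 : (a * b) * (d a * d b) ∈ I := I.mul_mem_right _ h
  have h4 : (a * d b) ^ 2 ∈ I := by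
    have he : (a * d b) ^ 2 = (a * d b) * (a * d b + d a * b) - (a * b) * (d a * d b) := by ring
    rw [he]; exact I.sub_mem h2 h3
  exact hrad ⟨2, h4⟩

lemma aux_deriv_mul (hd : IsDerivationFn d) {I : Ideal B} (hrad : I.radical ≤ I)
    (hdiff : IsDiffIdeal d I) {a b : B} (h : a * b ∈ I) : d a * b ∈ I := by
  rw [mul_comm]; exact aux_mul_deriv hd hrad hdiff (mul_comm a b ▸ h)

/-- All products of iterated derivatives of `a` and `b` lie in a radical differential
ideal containing `a*b`. -/
lemma aux_iter_prod (hd : IsDerivationFn d) {I : Ideal B} (hrad : I.radical ≤ I)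
    (hdiff : IsDiffIdeal d I) {a b : B} (h : a * b ∈ I) (n m : ℕ) :
    d^[n] a * d^[m] b ∈ I := by
  have hn : ∀ k, d^[k] a * b ∈ I := by
    intro k
    induction k with
    | zero => simpa using h
    | succ k ih =>
      rw [Function.iterate_succ_apply']
      exact aux_deriv_mul hd hrad hdiff ih
  induction m with
  | zero => simpa using hn n
  | succ m ih =>
    rw [Function.iterate_succ_apply']
    exact aux_mul_deriv hd hrad hdiff ih

lemma aux_deriv_zero (hd : IsDerivationFn d) : d 0 = 0 := by
  have := hd.1 0 0
  simp only [add_zero] at this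
  exact (left_eq_add.mp this)

/-- The span of a set closed under `d` (into the span) is a differential ideal. -/
lemma aux_span_diff (hd : IsDerivationFn d) {s : Set B}
    (hs : ∀ x ∈ s, d x ∈ Ideal.span s) : IsDiffIdeal d (Ideal.span s) := by
  intro x hx
  induction hx using Submodule.span_induction with
  | mem x h => exact hs x h
  | zero => rw [aux_deriv_zero hd]; exact (Ideal.span s).zero_mem
  | add x y hx hy ihx ihy => rw [hd.1]; exact (Ideal.span s).add_mem ihx ihy
  | smul r x hx ihx =>
    rw [smul_eq_mul, hd.2]
    exact (Ideal.span s).add_mem ((Ideal.span s).mul_mem_left _ ihx)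
      ((Ideal.span s).mul_mem_left _ hx)

/-- In a Keigher ring, any differential ideal disjoint from a multiplicative submonoid
is contained in a prime differential ideal disjoint from it. -/
lemma aux_exists_diff_prime (hK : IsKeigher d) (I : Ideal B) (hI : IsDiffIdeal d I)
    (S : Submonoid B) (hdisj : ∀ s ∈ S, s ∉ I) :
    ∃ P : Ideal B, P.IsPrime ∧ IsDiffIdeal d P ∧ I ≤ P ∧ ∀ s ∈ S, s ∉ P := by
  obtain ⟨hd, hKei⟩ := hK
  set T : Set (Ideal B) :=
    {J | IsDiffIdeal d J ∧ J.radical ≤ J ∧ ∀ s ∈ S, s ∉ J} with hT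
  have hIT : I.radical ∈ T := by
    refine ⟨hKei I hI, (Ideal.radical_idem I).le, ?_⟩
    intro s hs hsI
    obtain ⟨k, hk⟩ := hsI
    exact hdisj _ (Submonoid.pow_mem S hs k) hk
  obtain ⟨P, hIP, hPT, hPmax⟩ := zorn_le_nonempty₀ T (fun c hcT hc y hyc => by
    refine ⟨sSup c, ⟨?_, ?_, ?_⟩, fun z hz => le_sSup hz⟩
    · intro x hx
      obtain ⟨J, hJc, hxJ⟩ := (Submodule.mem_sSup_of_directed ⟨y, hyc⟩ hc.directedOn).1 hx
      exact le_sSup hJc ((hcT hJc).1 _ hxJ)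
    · intro x hx
      obtain ⟨k, hk⟩ := hx
      obtain ⟨J, hJc, hxJ⟩ := (Submodule.mem_sSup_of_directed ⟨y, hyc⟩ hc.directedOn).1 hk
      exact le_sSup hJc ((hcT hJc).2.1 ⟨k, hxJ⟩)
    · intro s hs hsI
      obtain ⟨J, hJc, hxJ⟩ := (Submodule.mem_sSup_of_directed ⟨y, hyc⟩ hc.directedOn).1 hsI
      exact (hcT hJc).2.2 _ hs hxJ) I.radical hIT
  obtain ⟨hPdiff, hPrad, hPS⟩ := hPT
  have hPmax' : ∀ z ∈ T, P ≤ z → z = P := fun z hz hPz => le_antisymm (hPmax hz hPz) hPz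
  have hIleP : I ≤ P := le_trans (Ideal.le_radical) hIP
  refine ⟨P, ?_, hPdiff, hIleP, hPS⟩
  constructor
  · rw [Ideal.ne_top_iff_one]
    exact hPS 1 S.one_mem
  · intro a b hab
    by_contra hcon
    push_neg at hcon
    obtain ⟨ha, hb⟩ := hcon
    -- the big differential ideals generated by P and a (resp. b)
    have key : ∀ x : B, x ∉ P →
        ∃ s ∈ S, s ∈ ((Ideal.span (↑P ∪ Set.range fun k => d^[k] x)).radical) := by
      intro x hx
      set R : Set B := ↑P ∪ Set.range fun k => d^[k] x with hR
      have hspan : IsDiffIdeal d (Ideal.span R) := by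
        apply aux_span_diff hd
        intro y hy
        rcases hy with hy | ⟨k, rfl⟩
        · exact Ideal.subset_span (Or.inl (hPdiff _ hy))
        · exact Ideal.subset_span (Or.inr ⟨k + 1, by
            simp [Function.iterate_succ_apply']⟩)
      have hJdiff : IsDiffIdeal d (Ideal.span R).radical := hKei _ hspan
      have hPJ : P ≤ (Ideal.span R).radical :=
        fun x hx => Ideal.le_radical (Ideal.subset_span (Or.inl hx))
      have hxJ : x ∈ (Ideal.span R).radical :=
        Ideal.le_radical (Ideal.subset_span (Or.inr ⟨0, rfl⟩))
      by_contra hno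
      push_neg at hno
      have hJT : (Ideal.span R).radical ∈ T :=
        ⟨hJdiff, (Ideal.radical_idem _).le, hno⟩
      have := hPmax' _ hJT hPJ
      rw [this] at hxJ
      exact hx hxJ
    obtain ⟨s₁, hs₁S, hs₁⟩ := key a ha
    obtain ⟨s₂, hs₂S, hs₂⟩ := key b hb
    -- products of generators lie in P
    have hmul : Ideal.span (↑P ∪ Set.range fun k => d^[k] a) *
        Ideal.span (↑P ∪ Set.range fun k => d^[k] b) ≤ P := by
      rw [Ideal.span_mul_span]
      rw [Ideal.span_le]
      intro z hz
      obtain ⟨u, hu, v, hv, rfl⟩ := hz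
      rcases hu with hu | ⟨k, rfl⟩
      · exact P.mul_mem_right _ hu
      rcases hv with hv | ⟨l, rfl⟩
      · exact P.mul_mem_left _ hv
      · exact aux_iter_prod hd hPrad hPdiff hab k l
    obtain ⟨k₁, hk₁⟩ := hs₁
    obtain ⟨k₂, hk₂⟩ := hs₂
    have hsa : s₁ ^ (k₁ + k₂) ∈ Ideal.span (↑P ∪ Set.range fun k => d^[k] a) := by
      rw [pow_add]; exact Ideal.mul_mem_right _ _ hk₁
    have hsb : s₂ ^ (k₁ + k₂) ∈ Ideal.span (↑P ∪ Set.range fun k => d^[k] b) := by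
      rw [add_comm, pow_add]; exact Ideal.mul_mem_right _ _ hk₂
    have : (s₁ * s₂) ^ (k₁ + k₂) ∈ P := by
      rw [mul_pow]
      exact hmul (Ideal.mul_mem_mul hsa hsb)
    exact hPS _ (S.mul_mem hs₁S hs₂S) (hPrad ⟨_, this⟩)

end Aux

section Step

variable {A B : Type*} [CommRing A] [CommRing B]

/-- One-step differential going-up. -/
lemma aux_step (dA : A → A) (dB : B → B) (hB : IsKeigher dB)
    (f : A →+* B) (hf : ∀ a : A, f (dA a) = dB (f a))
    (hGU : ∀ 𝔭₁ 𝔭₂ : Ideal A, 𝔭₁.IsPrime → 𝔭₂.IsPrime → 𝔭₁ ≤ 𝔭₂ →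
      ∀ 𝔮₁ : Ideal B, 𝔮₁.IsPrime → Ideal.comap f 𝔮₁ = 𝔭₁ →
        ∃ 𝔮₂ : Ideal B, 𝔮₂.IsPrime ∧ 𝔮₁ ≤ 𝔮₂ ∧ Ideal.comap f 𝔮₂ = 𝔭₂)
    {P₀ P₁ : Ideal A} (hP₀p : P₀.IsPrime) (hP₁p : P₁.IsPrime)
    (hP₁d : IsDiffIdeal dA P₁) (h01 : P₀ ≤ P₁)
    {Q₀ : Ideal B} (hQ₀p : Q₀.IsPrime) (hQ₀d : IsDiffIdeal dB Q₀)
    (hlie : Ideal.comap f Q₀ = P₀) :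
    ∃ Q₁ : Ideal B, Q₁.IsPrime ∧ IsDiffIdeal dB Q₁ ∧ Q₀ ≤ Q₁ ∧
      Ideal.comap f Q₁ = P₁ := by
  obtain ⟨q, hqp, hq0, hqlie⟩ := hGU P₀ P₁ hP₀p hP₁p h01 Q₀ hQ₀p hlie
  set s : Set B := ↑Q₀ ∪ f '' ↑P₁ with hs
  have hIdiff : IsDiffIdeal dB (Ideal.span s) := by
    apply aux_span_diff hB.1
    intro x hx
    rcases hx with hx | ⟨p, hp, rfl⟩
    · exact Ideal.subset_span (Or.inl (hQ₀d _ hx))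
    · exact Ideal.subset_span (Or.inr ⟨dA p, hP₁d _ hp, (hf p)⟩)
  set S : Submonoid B := Submonoid.map (f : A →* B) P₁.primeCompl with hS
  have hIq : Ideal.span s ≤ q := by
    rw [Ideal.span_le]
    rintro x (hx | ⟨p, hp, rfl⟩)
    · exact hq0 hx
    · rw [← hqlie] at hp; exact hp
  have hdisj : ∀ t ∈ S, t ∉ Ideal.span s := by
    rintro t ⟨u, hu, rfl⟩ htI
    exact hu (by rw [← hqlie]; exact hIq htI)
  obtain ⟨Q₁, hQ₁p, hQ₁d, hIQ₁, hQ₁S⟩ := aux_exists_diff_prime hB (Ideal.span s) hIdiff S hdisj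
  refine ⟨Q₁, hQ₁p, hQ₁d, ?_, ?_⟩
  · exact fun x hx => hIQ₁ (Ideal.subset_span (Or.inl hx))
  · apply le_antisymm
    · intro x hx
      by_contra hxP
      exact hQ₁S (f x) ⟨x, hxP, rfl⟩ hx
    · intro p hp
      exact hIQ₁ (Ideal.subset_span (Or.inr ⟨p, hp, rfl⟩))

end Step

/-- going-up for primes implies going-up for prime differential ideals
(chain version). -/
theorem going_up_diff_of_going_up
    {A B : Type*} [CommRing A] [CommRing B]
    (dA : A → A) (dB : B → B) (hA : IsKeigher dA) (hB : IsKeigher dB)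
    (f : A →+* B) (hf : ∀ a : A, f (dA a) = dB (f a))
    (hGU : ∀ 𝔭₁ 𝔭₂ : Ideal A, 𝔭₁.IsPrime → 𝔭₂.IsPrime → 𝔭₁ ≤ 𝔭₂ →
      ∀ 𝔮₁ : Ideal B, 𝔮₁.IsPrime → Ideal.comap f 𝔮₁ = 𝔭₁ →
        ∃ 𝔮₂ : Ideal B, 𝔮₂.IsPrime ∧ 𝔮₁ ≤ 𝔮₂ ∧ Ideal.comap f 𝔮₂ = 𝔭₂)
    (n m : ℕ) (hm : 1 ≤ m) (hmn : m ≤ n)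
    (P : Fin n → Ideal A) (hPmono : ∀ i j : Fin n, i ≤ j → P i ≤ P j)
    (hPprime : ∀ i, (P i).IsPrime) (hPdiff : ∀ i, IsDiffIdeal dA (P i))
    (Q : Fin m → Ideal B) (hQmono : ∀ i j : Fin m, i ≤ j → Q i ≤ Q j)
    (hQprime : ∀ i, (Q i).IsPrime) (hQdiff : ∀ i, IsDiffIdeal dB (Q i))
    (hlie : ∀ i : Fin m, Ideal.comap f (Q i) = P (Fin.castLE hmn i)) :
    ∃ Q' : Fin n → Ideal B,
      (∀ i j : Fin n, i ≤ j → Q' i ≤ Q' j) ∧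
      (∀ i, (Q' i).IsPrime) ∧ (∀ i, IsDiffIdeal dB (Q' i)) ∧
      (∀ i, Ideal.comap f (Q' i) = P i) ∧
      (∀ i : Fin m, Q' (Fin.castLE hmn i) = Q i) := by
  have main : ∀ k, m ≤ k → ∀ hk : k ≤ n,
      ∃ Q' : Fin k → Ideal B,
        (∀ i j : Fin k, i ≤ j → Q' i ≤ Q' j) ∧
        (∀ i, (Q' i).IsPrime) ∧ (∀ i, IsDiffIdeal dB (Q' i)) ∧
        (∀ i, Ideal.comap f (Q' i) = P (Fin.castLE hk i)) ∧
        (∀ i : Fin m, ∀ hmk : m ≤ k, Q' (Fin.castLE hmk i) = Q i) := by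
    intro k hmk
    induction k, hmk using Nat.le_induction with
    | base =>
      intro hk
      refine ⟨Q, hQmono, hQprime, hQdiff, ?_, ?_⟩
      · intro i
        have : Fin.castLE hk i = Fin.castLE hmn i := Fin.ext rfl
        rw [this]; exact hlie i
      · intro i hmk'
        exact congrArg Q (Fin.ext rfl)
    | succ k hmk ih =>
      intro hk1
      have hk : k ≤ n := Nat.le_of_succ_le hk1
      obtain ⟨Q', hmono, hprime, hdiff, hcom, hagree⟩ := ih hk
      have hkpos : 0 < k := lt_of_lt_of_le hm hmk
      set i₀ : Fin k := ⟨k - 1, Nat.sub_lt hkpos one_pos⟩ with hi₀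
      have hPle : P (Fin.castLE hk i₀) ≤ P ⟨k, hk1⟩ := by
        apply hPmono
        simp only [Fin.le_def, Fin.castLE]
        omega
      obtain ⟨Qn, hQnp, hQnd, hQ0n, hQnlie⟩ :=
        aux_step dA dB hB f hf hGU (hPprime _) (hPprime ⟨k, hk1⟩)
          (hPdiff ⟨k, hk1⟩) hPle (hprime i₀) (hdiff i₀) (hcom i₀)
      set Q'' : Fin (k + 1) → Ideal B := Fin.snoc Q' Qn with hQ''
      have hval : ∀ (i : Fin (k + 1)) (h : i.val < k), Q'' i = Q' ⟨i.val, h⟩ := by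
        intro i h
        calc Q'' i = Q'' (Fin.castSucc ⟨i.val, h⟩) := congrArg Q'' (Fin.ext rfl)
          _ = Q' ⟨i.val, h⟩ := by rw [hQ'']; exact Fin.snoc_castSucc ..
      have hlast : ∀ (i : Fin (k + 1)), i.val = k → Q'' i = Qn := by
        intro i h
        calc Q'' i = Q'' (Fin.last k) := congrArg Q'' (Fin.ext h)
          _ = Qn := by rw [hQ'']; exact Fin.snoc_last ..
      have hQ'top : ∀ (i : Fin k), Q' i ≤ Qn := by
        intro i
        refine le_trans (hmono i i₀ ?_) hQ0n
        simp only [Fin.le_def, hi₀]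
        omega
      refine ⟨Q'', ?_, ?_, ?_, ?_, ?_⟩
      · intro i j hij
        rcases lt_or_ge j.val k with hj | hj
        · have hi : i.val < k := lt_of_le_of_lt hij hj
          rw [hval i hi, hval j hj]
          exact hmono _ _ hij
        · have hj' : j.val = k := le_antisymm (Nat.lt_succ_iff.mp j.isLt) hj
          rw [hlast j hj']
          rcases lt_or_ge i.val k with hi | hi
          · rw [hval i hi]; exact hQ'top _
          · rw [hlast i (le_antisymm (Nat.lt_succ_iff.mp i.isLt) hi)]
      · intro i
        rcases lt_or_ge i.val k with hi | hi
        · rw [hval i hi]; exact hprime _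
        · rw [hlast i (le_antisymm (Nat.lt_succ_iff.mp i.isLt) hi)]; exact hQnp
      · intro i
        rcases lt_or_ge i.val k with hi | hi
        · rw [hval i hi]; exact hdiff _
        · rw [hlast i (le_antisymm (Nat.lt_succ_iff.mp i.isLt) hi)]; exact hQnd
      · intro i
        rcases lt_or_ge i.val k with hi | hi
        · rw [hval i hi, hcom ⟨i.val, hi⟩]
          exact congrArg P (Fin.ext rfl)
        · have hi' : i.val = k := le_antisymm (Nat.lt_succ_iff.mp i.isLt) hi
          rw [hlast i hi', hQnlie]
          exact congrArg P (Fin.ext hi'.symm)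
      · intro i hmk'
        have hi : (Fin.castLE hmk' i).val < k := lt_of_lt_of_le i.isLt hmk
        rw [hval _ hi]
        have heq : (⟨(Fin.castLE hmk' i).val, hi⟩ : Fin k) = Fin.castLE hmk i :=
          Fin.ext rfl
        rw [heq]
        exact hagree i hmk
  obtain ⟨Q', h1, h2, h3, h4, h5⟩ := main n hmn le_rfl
  refine ⟨Q', h1, h2, h3, ?_, ?_⟩
  · intro i
    rw [h4 i]
    exact congrArg P (Fin.ext rfl)
  · intro i
    exact h5 i hmn
end

section
/- Let X, Y be topological spaces with Y irreducible, and let f : X → Y be a map such that the image f(U) of every open set U is constructible (a finite union of locally closed sets) and dense-hitting: for every nonempty closed irreducible Z ⊆ Y meeting f(X), f(X) ∩ Z is dense in Z. If for every irreducible closed Z ⊆ Y and every open U ⊆ X with f(U) ∩ Z ≠ ∅ the intersection f(U) ∩ Z is dense in Z, then f(U) is open for every open U; i.e., a constructible set that is dense in every irreducible closed set it meets, is open. -/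
/-- A constructible set: a finite union of locally closed sets. -/
def IsConstructibleSet {Y : Type*} [TopologicalSpace Y] (S : Set Y) : Prop :=
  ∃ (n : ℕ) (U C : Fin n → Set Y), (∀ i, IsOpen (U i)) ∧ (∀ i, IsClosed (C i)) ∧
    S = ⋃ i, U i ∩ C i


/-! If a point `x ∈ S` lay in the closure of `Sᶜ`, then, `Y` being Noetherian, it would lie in the
closure `Z` of an irreducible subset `T ⊆ Sᶜ`. Since `S ∩ Z` is dense in `Z` and `S` is a finite
union of locally closed sets, irreducibility of `Z` forces `S` to contain a nonempty open subset of
`Z`, and this open subset meets the dense subset `T` of `Z`, which is disjoint from `S`. -/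

open Set TopologicalSpace

lemma IsIrreducible.exists_subset_of_subset_iUnion_isClosed {X ι : Type*} [TopologicalSpace X]
    [Finite ι] {s : Set X} {t : ι → Set X} (hs : IsIrreducible s) (ht : ∀ i, IsClosed (t i))
    (hst : s ⊆ ⋃ i, t i) : ∃ i, s ⊆ t i := by
  have := Fintype.ofFinite ι
  classical
  obtain ⟨z, hz, hsz⟩ := isIrreducible_iff_sUnion_isClosed.mp hs (Finset.univ.image t)
    (by simpa using ht) (by simpa using hst)
  obtain ⟨i, -, rfl⟩ := Finset.mem_image.mp hz
  exact ⟨i, hsz⟩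

theorem TopologicalSpace.NoetherianSpace.exists_finite_set_irreducible_sUnion_eq {X : Type*}
    [TopologicalSpace X] [NoetherianSpace X] (s : Set X) :
    ∃ S : Set (Set X), S.Finite ∧ (∀ t ∈ S, IsIrreducible t) ∧ ⋃₀ S = s := by
  refine ⟨image (Subtype.val : s → X) '' irreducibleComponents s,
    NoetherianSpace.finite_irreducibleComponents.image _, ?_, ?_⟩
  · rintro _ ⟨t, ht, rfl⟩
    exact ht.1.image _ continuous_subtype_val.continuousOn
  · rw [← image_sUnion, sUnion_irreducibleComponents, image_univ, Subtype.range_coe]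

lemma IsConstructibleSet.exists_isOpen_inter_subset {Y : Type*} [TopologicalSpace Y]
    {S Z : Set Y} (hS : IsConstructibleSet S) (hZ : IsIrreducible Z)
    (hSZ : Z ⊆ closure (S ∩ Z)) : ∃ U, IsOpen U ∧ (U ∩ Z).Nonempty ∧ U ∩ Z ⊆ S := by
  obtain ⟨n, U, C, hU, hC, rfl⟩ := hS
  have hcover : Z ⊆ ⋃ i, closure (U i ∩ C i ∩ Z) := by
    rwa [← closure_iUnion_of_finite, ← iUnion_inter]
  obtain ⟨i, hi⟩ := hZ.exists_subset_of_subset_iUnion_isClosed (fun _ ↦ isClosed_closure) hcover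
  have hZC : Z ⊆ C i := hi.trans (closure_minimal (fun _ h ↦ h.1.2) (hC i))
  obtain ⟨y, ⟨hyU, -⟩, hyZ⟩ := closure_nonempty_iff.mp (hZ.nonempty.mono hi)
  exact ⟨U i, hU i, ⟨y, hyU, hyZ⟩, fun x hx ↦ mem_iUnion.mpr ⟨i, hx.1, hZC hx.2⟩⟩

theorem IsConstructibleSet.isOpen_of_forall_subset_closure_inter {Y : Type*}
    [TopologicalSpace Y] [NoetherianSpace Y] {S : Set Y} (hS : IsConstructibleSet S)
    (hd : ∀ Z : Set Y, IsClosed Z → IsIrreducible Z → (S ∩ Z).Nonempty → Z ⊆ closure (S ∩ Z)) :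
    IsOpen S := by
  rw [← isClosed_compl_iff, ← closure_subset_iff_isClosed]
  intro x hx
  by_contra hxS
  rw [notMem_compl_iff] at hxS
  obtain ⟨𝒯, h𝒯, h𝒯irr, h𝒯S⟩ := NoetherianSpace.exists_finite_set_irreducible_sUnion_eq Sᶜ
  rw [← h𝒯S, h𝒯.closure_sUnion, mem_iUnion₂] at hx
  obtain ⟨T, hT, hxT⟩ := hx
  have hTS : T ⊆ Sᶜ := h𝒯S ▸ subset_sUnion_of_mem hT
  have hTirr : IsIrreducible (closure T) := (h𝒯irr T hT).closure
  obtain ⟨U, hU, hUT, hUS⟩ := hS.exists_isOpen_inter_subset hTirr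
    (hd _ isClosed_closure hTirr ⟨x, hxS, hxT⟩)
  obtain ⟨y, hyU, hyT⟩ := closure_nonempty_iff.mp (hUT.mono hU.inter_closure)
  exact hTS hyT (hUS ⟨hyU, subset_closure hyT⟩)

theorem constructible_dense_in_irreducible_closed_is_open_general
    {X Y : Type*} [TopologicalSpace X] [TopologicalSpace Y]
    [TopologicalSpace.NoetherianSpace Y]
    (f : X → Y)
    (hc : ∀ U : Set X, IsOpen U → IsConstructibleSet (f '' U))
    (hd : ∀ Z : Set Y, IsClosed Z → IsIrreducible Z → ∀ U : Set X, IsOpen U →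
      (f '' U ∩ Z).Nonempty → Z ⊆ closure (f '' U ∩ Z)) :
    (∀ U : Set X, IsOpen U → IsOpen (f '' U)) ∧
    (∀ S : Set Y, IsConstructibleSet S →
      (∀ Z : Set Y, IsClosed Z → IsIrreducible Z → (S ∩ Z).Nonempty →
        Z ⊆ closure (S ∩ Z)) → IsOpen S) :=
  ⟨fun U hU ↦ (hc U hU).isOpen_of_forall_subset_closure_inter fun Z hZ hZirr ↦ hd Z hZ hZirr U hU,
    fun _ hS ↦ hS.isOpen_of_forall_subset_closure_inter⟩

/-- if images of opens under f are constructible and meet every irreducible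
closed set they touch densely, then images of opens are open; equivalently, a
constructible set that is dense in every irreducible closed set it meets is open. -/
theorem constructible_dense_in_irreducible_closed_is_open
    {X Y : Type*} [TopologicalSpace X] [TopologicalSpace Y]
    [IrreducibleSpace Y] [TopologicalSpace.NoetherianSpace Y] [QuasiSober Y]
    (f : X → Y)
    (hc : ∀ U : Set X, IsOpen U → IsConstructibleSet (f '' U))
    (hd : ∀ Z : Set Y, IsClosed Z → IsIrreducible Z → ∀ U : Set X, IsOpen U →
      (f '' U ∩ Z).Nonempty → Z ⊆ closure (f '' U ∩ Z)) :
    (∀ U : Set X, IsOpen U → IsOpen (f '' U)) ∧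
    (∀ S : Set Y, IsConstructibleSet S →
      (∀ Z : Set Y, IsClosed Z → IsIrreducible Z → (S ∩ Z).Nonempty →
        Z ⊆ closure (S ∩ Z)) → IsOpen S) :=
  constructible_dense_in_irreducible_closed_is_open_general f hc hd
end
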